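/- Let C be a positive-definite symmetric 2-tensor on V. If f : V → ℝ is an integrable function satisfying e^{k(x) + ½k(Ck)} f(x + Ck) = f(x) for all k ∈ V* and x ∈ V, and ∫_V f(y) dy = 1, then f equals the normalized centered Gaussian N(C) with covariance C. -/
import Mathlib


open MeasureTheory

variable {V : Type*} [NormedAddCommGroup V] [NormedSpace ℝ V] [FiniteDimensional ℝ V]
  [MeasurableSpace V] [BorelSpace V]

/-- Convolution of two real-valued functions: (f∗g)(x) = ∫ f(x−y) g(y) dy. -/
noncomputable def convol (μ : Measure V) (f g : V → ℝ) (x : V) : ℝ :=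
  ∫ y, f (x - y) * g y ∂μ

/-- The normalized centered Gaussian with inverse covariance form Q:
N(x) = exp(−½ Q(x,x)) / ∫ exp(−½ Q(x',x')) dx'. -/
noncomputable def gauss (μ : Measure V) (Q : V →ₗ[ℝ] Module.Dual ℝ V) (x : V) : ℝ :=
  Real.exp (-(1/2) * Q x x) / ∫ y, Real.exp (-(1/2) * Q y y) ∂μ

/-- Any integrable function fixed by σ(−, An(C)(k)) for all k and with total
integral 1 equals the normalized Gaussian N(C). -/
theorem gauss_characterization (μ : Measure V) [μ.IsAddHaarMeasure]
    (C : Module.Dual ℝ V →ₗ[ℝ] V) (Q : V →ₗ[ℝ] Module.Dual ℝ V)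
    (hCQ : ∀ x : V, C (Q x) = x) (hQC : ∀ k : Module.Dual ℝ V, Q (C k) = k)
    (hsymm : ∀ x y : V, Q x y = Q y x)
    (hpos : ∀ x : V, x ≠ 0 → 0 < Q x x)
    (f : V → ℝ) (hf : Integrable f μ)
    (hfix : ∀ (k : Module.Dual ℝ V) (x : V),
      Real.exp (k x + (1/2) * k (C k)) * f (x + C k) = f x)
    (hnorm : ∫ y, f y ∂μ = 1) :
    f = gauss μ Q := by
  have hform : ∀ x : V, f x = f 0 * Real.exp (-(1/2) * Q x x) := by
    intro x
    have h := hfix (Q x) 0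
    rw [hCQ, zero_add, map_zero, zero_add] at h
    have : f x = f 0 * Real.exp (-((1/2) * Q x x)) := by
      rw [← h, Real.exp_neg]
      field_simp
    simpa [neg_mul] using this
  have hI : f 0 * ∫ y, Real.exp (-(1/2) * Q y y) ∂μ = 1 := by
    have : (∫ y, f y ∂μ) = ∫ y, f 0 * Real.exp (-(1/2) * Q y y) ∂μ :=
      integral_congr_ae (Filter.Eventually.of_forall fun y => hform y)
    rw [integral_const_mul] at this
    rw [← this, hnorm]
  have hf0 : f 0 ≠ 0 := by
    intro h; rw [h, zero_mul] at hI; exact one_ne_zero hI.symm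
  funext x
  rw [hform x, gauss, eq_div_iff]
  · rw [mul_right_comm, hI, one_mul]
  · intro h; rw [h, mul_zero] at hI; exact one_ne_zero hI.symm
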